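/- arXiv:1501.00378 — 2 statements merged into one kernel-verified Lean document; each statement's English description precedes it below -/
import Mathlib

section
/- Let f be a binary string and suppose Q_d(f) is not an isometric subgraph of Q_d. Then for every d' > d, Q_{d'}(f) is not an isometric subgraph of Q_{d'}. -/
/-!
Appending to a word the complement of the last letter of `f` creates no new occurrence of `f`,
so `u ↦ u · ¬f_last` embeds `Q_d(f)` into `Q_{d+1}(f)` without changing Hamming distances.
Deleting the last letter maps `Q_{d+1}(f)` back to `Q_d(f)` and sends adjacent vertices to
adjacent or equal ones, so it does not increase graph distances. Hence a shortest path in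
`Q_{d+1}(f)` between two extended words projects to a path of Hamming length in `Q_d(f)`:
isometry passes from `Q_{d+1}(f)` down to `Q_d(f)`, and by induction to every smaller dimension.
-/

/-- `occursAt u f k` : the string `f` occurs in `u` starting at (0-based)
position `k`. -/
def occursAt {d m : ℕ} (u : Fin d → Bool) (f : Fin m → Bool) (k : ℕ) : Prop :=
  ∃ _h : k + m ≤ d, ∀ i : Fin m, u ⟨k + i.1, by have := i.2; omega⟩ = f i

/-- `hasFactor u f` : `f` appears as a factor (consecutive bits) of `u`. -/
def hasFactor {d m : ℕ} (u : Fin d → Bool) (f : Fin m → Bool) : Prop :=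
  ∃ k, occursAt u f k

/-- The `d`-dimensional hypercube `Q_d` on binary strings of length `d`. -/
def Qcube (d : ℕ) : SimpleGraph (Fin d → Bool) where
  Adj α β := hammingDist α β = 1
  symm := by constructor; intro a b h; rwa [hammingDist_comm]
  loopless := by constructor; intro a h; rw [hammingDist_self] at h; omega

/-- The generalized Fibonacci cube `Q_d(f)`: the subgraph of `Q_d` induced on
the strings avoiding `f` as a factor. -/
def Qgraph (d : ℕ) {m : ℕ} (f : Fin m → Bool) :
    SimpleGraph {u : Fin d → Bool // ¬ hasFactor u f} where
  Adj a b := hammingDist a.1 b.1 = 1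
  symm := by constructor; intro a b h; rwa [hammingDist_comm]
  loopless := by constructor; intro a h; rw [hammingDist_self] at h; omega

/-- `Q_d(f)` is an isometric subgraph of `Q_d`: internal distances equal
Hamming distances. -/
def IsIsometric (d : ℕ) {m : ℕ} (f : Fin m → Bool) : Prop :=
  ∀ a b : {u : Fin d → Bool // ¬ hasFactor u f},
    (Qgraph d f).dist a b = hammingDist a.1 b.1

/-- `f` is good: `Q_d(f)` is isometric in `Q_d` for all `d ≥ 1`. -/
def Good {m : ℕ} (f : Fin m → Bool) : Prop := ∀ d, 1 ≤ d → IsIsometric d f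

/-- `f` is bad: `Q_d(f)` is not isometric in `Q_d` for some `d ≥ 1`. -/
def Bad {m : ℕ} (f : Fin m → Bool) : Prop := ∃ d, 1 ≤ d ∧ ¬ IsIsometric d f

/-- The index `B(f)`: the smallest `d` with `Q_d(f)` not isometric in `Q_d`. -/
noncomputable def Bindex {m : ℕ} (f : Fin m → Bool) : ℕ :=
  sInf {d | ¬ IsIsometric d f}

/-- Flip the `i`-th bit of `α`. -/
def flipBit {d : ℕ} (α : Fin d → Bool) (i : Fin d) : Fin d → Bool :=
  Function.update α i (!(α i))

/-- `α, β` are `p`-critical words for `Q_d(f)`. -/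
def pCritical (d : ℕ) {m : ℕ} (f : Fin m → Bool) (p : ℕ)
    (α β : Fin d → Bool) : Prop :=
  ¬ hasFactor α f ∧ ¬ hasFactor β f ∧ hammingDist α β = p ∧ 2 ≤ p ∧
    ((∀ i, α i ≠ β i → hasFactor (flipBit α i) f) ∨
     (∀ i, α i ≠ β i → hasFactor (flipBit β i) f))


namespace SimpleGraph

variable {V W : Type*} {G : SimpleGraph V} {H : SimpleGraph W}

lemma Walk.edist_map_le_length_of_edist_adj_le_one {φ : V → W}
    (hφ : ∀ x y, G.Adj x y → H.edist (φ x) (φ y) ≤ 1) {u v : V} (p : G.Walk u v) :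
    H.edist (φ u) (φ v) ≤ p.length := by
  induction p with
  | nil => simp
  | @cons x y z hxy p ih =>
    calc H.edist (φ x) (φ z) ≤ H.edist (φ x) (φ y) + H.edist (φ y) (φ z) := H.edist_triangle
      _ ≤ 1 + p.length := add_le_add (hφ x y hxy) ih
      _ = (p.cons hxy).length := by rw [Walk.length_cons, Nat.cast_succ, add_comm]

lemma edist_map_le_of_edist_adj_le_one {φ : V → W}
    (hφ : ∀ x y, G.Adj x y → H.edist (φ x) (φ y) ≤ 1) (u v : V) :
    H.edist (φ u) (φ v) ≤ G.edist u v := by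
  rw [edist_eq_sInf]
  exact le_sInf <| Set.forall_mem_range.2 (·.edist_map_le_length_of_edist_adj_le_one hφ)

end SimpleGraph

lemma hammingDist_snoc {n : ℕ} {β : Type*} [DecidableEq β] (x y : Fin n → β) (a b : β) :
    hammingDist (Fin.snoc x a : Fin (n + 1) → β) (Fin.snoc y b) =
      hammingDist x y + if a = b then 0 else 1 := by
  simp only [hammingDist, Finset.card_filter, Fin.sum_univ_castSucc, Fin.snoc_castSucc,
    Fin.snoc_last, ite_not]

lemma hammingDist_init_le {n : ℕ} {β : Type*} [DecidableEq β] (x y : Fin (n + 1) → β) :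
    hammingDist (Fin.init x) (Fin.init y) ≤ hammingDist x y := by
  conv_rhs => rw [← Fin.snoc_init_self x, ← Fin.snoc_init_self y, hammingDist_snoc]
  omega

lemma hasFactor_of_hasFactor_init {n m : ℕ} {u : Fin (n + 1) → Bool} {f : Fin m → Bool}
    (h : hasFactor (Fin.init u) f) : hasFactor u f := by
  obtain ⟨k, hk, hocc⟩ := h
  exact ⟨k, by omega, fun i => hocc i⟩

lemma not_hasFactor_snoc {n d : ℕ} {f : Fin (n + 1) → Bool} {u : Fin d → Bool}
    (hu : ¬ hasFactor u f) :
    ¬ hasFactor (Fin.snoc u (!f (Fin.last n)) : Fin (d + 1) → Bool) f := by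
  rintro ⟨k, hk, hocc⟩
  by_cases hkd : k + (n + 1) ≤ d
  · refine hu ⟨k, hkd, fun i => ?_⟩
    have := hocc i
    rwa [show (⟨k + i.1, _⟩ : Fin (d + 1)) = Fin.castSucc ⟨k + i.1, by omega⟩ from rfl,
      Fin.snoc_castSucc] at this
  · have := hocc (Fin.last n)
    rw [show (⟨k + (Fin.last n).1, _⟩ : Fin (d + 1)) = Fin.last d by ext; simp; omega,
      Fin.snoc_last] at this
    simp at this

section Qgraph

variable {d m n : ℕ}

lemma Qgraph.hammingDist_le_edist {f : Fin m → Bool}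
    (a b : {u : Fin d → Bool // ¬ hasFactor u f}) :
    (hammingDist a.1 b.1 : ℕ∞) ≤ (Qgraph d f).edist a b := by
  rw [SimpleGraph.edist_eq_sInf]
  refine le_sInf <| Set.forall_mem_range.2 fun p => ?_
  induction p with
  | nil => simp
  | @cons x y z hxy p ih =>
    have hxy : hammingDist x.1 y.1 = 1 := hxy
    have ih : hammingDist y.1 z.1 ≤ p.length := by exact_mod_cast ih
    have := hammingDist_triangle x.1 y.1 z.1
    rw [SimpleGraph.Walk.length_cons]
    exact_mod_cast (by omega : hammingDist x.1 z.1 ≤ p.length + 1)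

lemma isIsometric_iff_edist_le {f : Fin m → Bool} :
    IsIsometric d f ↔ ∀ a b, (Qgraph d f).edist a b ≤ hammingDist a.1 b.1 := by
  refine forall₂_congr fun a b => ?_
  rcases eq_or_ne a b with rfl | hab
  · simp
  · have h0 : hammingDist a.1 b.1 ≠ 0 := hammingDist_ne_zero.2 (Subtype.coe_injective.ne hab)
    rw [SimpleGraph.dist, ENat.toNat_eq_iff h0, le_antisymm_iff,
      and_iff_left (Qgraph.hammingDist_le_edist a b)]

lemma IsIsometric.of_succ {f : Fin (n + 1) → Bool} (H : IsIsometric (d + 1) f) :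
    IsIsometric d f := by
  rw [isIsometric_iff_edist_le] at H ⊢
  let ext (a : {u : Fin d → Bool // ¬ hasFactor u f}) :
      {u : Fin (d + 1) → Bool // ¬ hasFactor u f} :=
    ⟨Fin.snoc a.1 (!f (Fin.last n)), not_hasFactor_snoc a.2⟩
  let res (x : {u : Fin (d + 1) → Bool // ¬ hasFactor u f}) :
      {u : Fin d → Bool // ¬ hasFactor u f} :=
    ⟨Fin.init x.1, mt hasFactor_of_hasFactor_init x.2⟩
  have hres : ∀ x y, (Qgraph (d + 1) f).Adj x y → (Qgraph d f).edist (res x) (res y) ≤ 1 := by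
    intro x y hxy
    have hxy : hammingDist x.1 y.1 = 1 := hxy
    have := hammingDist_init_le x.1 y.1
    rw [SimpleGraph.edist_le_one_iff_adj_or_eq]
    rcases Nat.le_one_iff_eq_zero_or_eq_one.1 (hxy ▸ this) with h0 | h1
    · exact Or.inr (Subtype.ext (hammingDist_eq_zero.1 h0))
    · exact Or.inl h1
  intro a b
  calc (Qgraph d f).edist a b = (Qgraph d f).edist (res (ext a)) (res (ext b)) := by
        simp only [res, ext, Fin.init_snoc]
    _ ≤ (Qgraph (d + 1) f).edist (ext a) (ext b) :=
        SimpleGraph.edist_map_le_of_edist_adj_le_one hres _ _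
    _ ≤ hammingDist (ext a).1 (ext b).1 := H _ _
    _ = hammingDist a.1 b.1 := by simp [ext, hammingDist_snoc]

lemma IsIsometric.of_le {d' : ℕ} {f : Fin (n + 1) → Bool} (hdd' : d ≤ d')
    (H : IsIsometric d' f) : IsIsometric d f := by
  induction d', hdd' using Nat.le_induction with
  | base => exact H
  | succ k _ ih => exact ih H.of_succ

-- The empty word is a factor of every word, so `Q_d(ε)` has no vertices.
lemma isIsometric_of_fin_zero (f : Fin 0 → Bool) : IsIsometric d f :=
  fun a => absurd ⟨0, ⟨by omega, fun i => i.elim0⟩⟩ a.2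

end Qgraph

/-- Lemma 2.2: if `Q_d(f)` is not isometric in `Q_d`, then `Q_{d'}(f)` is not
isometric in `Q_{d'}` for all `d' > d`. -/
theorem stmt_6 (m d : ℕ) (f : Fin m → Bool) (h : ¬ IsIsometric d f) :
    ∀ d', d < d' → ¬ IsIsometric d' f := by
  intro d' hdd' H
  cases m with
  | zero => exact h (isIsometric_of_fin_zero f)
  | succ n => exact h (H.of_le hdd'.le)
end

section
/- Let f be a nonempty binary string and suppose α, β are 2-critical words for Q_d(f) with d = B(f), differing in coordinates i_1 < i_2, with f-occurrences in α + e_{i_1} and α + e_{i_2} starting at positions u_{i_1} and u_{i_2} respectively. Then i_1 ∈ [u_{i_2}, u_{i_2} + |f| - 1] and i_2 ∈ [u_{i_1}, u_{i_1} + |f| - 1]. -/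
/-! Since `β = α + e_{i₁} + e_{i₂}`, and flipping a bit outside an occurrence of `f` keeps
that occurrence, a flipped coordinate outside the occurrence created by the other flip would
leave an occurrence of `f` in `β`. -/

lemma flipBit_comm {d : ℕ} (α : Fin d → Bool) (i j : Fin d) :
    flipBit (flipBit α i) j = flipBit (flipBit α j) i := by
  ext k
  by_cases hi : k = i <;> by_cases hj : k = j <;> simp_all [flipBit, Function.update_apply]

lemma occursAt_update_of_notMem {d m : ℕ} {u : Fin d → Bool} {f : Fin m → Bool} {k : ℕ}
    (h : occursAt u f k) (j : Fin d) (hj : ¬ (k ≤ j.1 ∧ j.1 < k + m)) (b : Bool) :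
    occursAt (Function.update u j b) f k := by
  obtain ⟨hk, hu⟩ := h
  refine ⟨hk, fun i => ?_⟩
  rw [Function.update_of_ne (Fin.ne_of_val_ne (show k + i.1 ≠ j.1 by have := i.2; omega)), hu]

lemma eq_flipBit_flipBit_of_hammingDist_eq_two {d : ℕ} {α β : Fin d → Bool}
    (hH : hammingDist α β = 2) {i j : Fin d} (hij : i ≠ j)
    (hi : α i ≠ β i) (hj : α j ≠ β j) :
    β = flipBit (flipBit α i) j := by
  have hsupp : ({i, j} : Finset (Fin d)) = Finset.univ.filter (fun k => α k ≠ β k) :=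
    Finset.eq_of_subset_of_card_le (by simp [Finset.insert_subset_iff, hi, hj])
      (by rw [Finset.card_pair hij]; exact hH.le)
  ext k
  by_cases hkj : k = j
  · subst hkj; simp [flipBit, Function.update_of_ne hij.symm, Bool.eq_not_iff.2 hj.symm]
  by_cases hki : k = i
  · subst hki; simp [flipBit, Function.update_of_ne hkj, Bool.eq_not_iff.2 hi.symm]
  have : α k = β k := by
    by_contra hk
    have : k ∈ ({i, j} : Finset (Fin d)) := by rw [hsupp]; simpa using hk
    simp [hki, hkj] at this
  simp [flipBit, Function.update_of_ne hkj, Function.update_of_ne hki, this]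

theorem stmt_16_general (m : ℕ) (f : Fin m → Bool)
    (d : ℕ) (α β : Fin d → Bool)
    (hβ : ¬ hasFactor β f)
    (hH : hammingDist α β = 2)
    (i₁ i₂ : Fin d) (h12 : i₁.1 < i₂.1)
    (h1 : α i₁ ≠ β i₁) (h2 : α i₂ ≠ β i₂)
    (u₁ u₂ : ℕ)
    (hu₁ : occursAt (flipBit α i₁) f u₁)
    (hu₂ : occursAt (flipBit α i₂) f u₂) :
    (u₂ ≤ i₁.1 ∧ i₁.1 < u₂ + m) ∧ (u₁ ≤ i₂.1 ∧ i₂.1 < u₁ + m) := by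
  have hβ₁ : β = flipBit (flipBit α i₁) i₂ :=
    eq_flipBit_flipBit_of_hammingDist_eq_two hH (Fin.ne_of_val_ne h12.ne) h1 h2
  have hβ₂ : β = flipBit (flipBit α i₂) i₁ := hβ₁.trans (flipBit_comm α i₁ i₂)
  constructor
  · by_contra hout
    rw [hβ₂] at hβ
    exact hβ ⟨u₂, occursAt_update_of_notMem hu₂ i₁ hout _⟩
  · by_contra hout
    rw [hβ₁] at hβ
    exact hβ ⟨u₁, occursAt_update_of_notMem hu₁ i₂ hout _⟩

/-- For `2`-critical words `α, β` for `Q_{B(f)}(f)` differing in coordinates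
`i₁ < i₂`, with `f`-occurrences in `α + e_{i₁}`, `α + e_{i₂}` starting at
`u₁, u₂` respectively, each flipped coordinate lies inside the occurrence of
`f` created by the other flip. -/
theorem stmt_16 (m : ℕ) (hm : 0 < m) (f : Fin m → Bool) (hBad : Bad f)
    (d : ℕ) (hd : d = Bindex f) (α β : Fin d → Bool)
    (hα : ¬ hasFactor α f) (hβ : ¬ hasFactor β f)
    (hH : hammingDist α β = 2)
    (i₁ i₂ : Fin d) (h12 : i₁.1 < i₂.1)
    (h1 : α i₁ ≠ β i₁) (h2 : α i₂ ≠ β i₂)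
    (u₁ u₂ : ℕ)
    (hu₁ : occursAt (flipBit α i₁) f u₁)
    (hu₂ : occursAt (flipBit α i₂) f u₂) :
    (u₂ ≤ i₁.1 ∧ i₁.1 < u₂ + m) ∧ (u₁ ≤ i₂.1 ∧ i₂.1 < u₁ + m) :=
  stmt_16_general m f d α β hβ hH i₁ i₂ h12 h1 h2 u₁ u₂ hu₁ hu₂
end
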